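/- arXiv:2309.03490 — 2 statements merged into one kernel-verified Lean document; each statement's English description precedes it below -/
import Mathlib

section
/- Let p be a probability density on ℝ^d with finite third moment, i.e. ∫_{ℝ^d} |y|³ p(y) dy < ∞. For t ∈ (0,1) define q_t(x) := ∫_{ℝ^d} (2π(1-t²))^{-d/2} exp(-|x-ty|²/(2(1-t²))) p(y) dy and S(t,x) := ∇_x log q_t(x). Then for every x ∈ ℝ^d, lim_{t→0⁺} (x + S(t,x))/t = ∫_{ℝ^d} y p(y) dy, the mean of p. -/
open MeasureTheory Real Filter Set Matrix
open scoped ENNReal Pointwise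

noncomputable section

/-- `ℝ^d` as a Euclidean space. -/
abbrev Ed (d : ℕ) := EuclideanSpace ℝ (Fin d)

/-- Density of the standard Gaussian measure `γ_d` on `ℝ^d`. -/
def stdGaussDensity (d : ℕ) (x : Ed d) : ℝ :=
  (2 * π) ^ (-(d : ℝ) / 2) * Real.exp (-‖x‖ ^ 2 / 2)

/-- The standard Gaussian measure `γ_d` on `ℝ^d`. -/
def stdGaussian (d : ℕ) : Measure (Ed d) :=
  volume.withDensity fun x => ENNReal.ofReal (stdGaussDensity d x)

/-- Density of the Gaussian `N(m, s2 • I_d)` on `ℝ^d`. -/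
def gaussDensity {d : ℕ} (m : Ed d) (s2 : ℝ) (x : Ed d) : ℝ :=
  (2 * π * s2) ^ (-(d : ℝ) / 2) * Real.exp (-‖x - m‖ ^ 2 / (2 * s2))

/-- Relative density `r = p / φ` of a density `p` with respect to the standard Gaussian. -/
def relDensity {d : ℕ} (p : Ed d → ℝ) (x : Ed d) : ℝ := p x / stdGaussDensity d x

/-- The operator `𝒬_{1-t} r (x) = ∫ r (t x + √(1-t²) z) dγ_d(z)`. -/
def Qop {d : ℕ} (p : Ed d → ℝ) (t : ℝ) (x : Ed d) : ℝ :=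
  ∫ z, relDensity p (t • x + Real.sqrt (1 - t ^ 2) • z) ∂(stdGaussian d)

/-- The Föllmer velocity field `V(t,x) = (1/t) ∇ log 𝒬_{1-t} r (x)` for `t ∈ (0,1]`. -/
def follmerV {d : ℕ} (p : Ed d → ℝ) (t : ℝ) (x : Ed d) : Ed d :=
  (1 / t) • gradient (fun y => Real.log (Qop p t y)) x

/-- The Jacobian matrix `∇_x V(t,x)` of the Föllmer velocity field. -/
def jacobianV {d : ℕ} (p : Ed d → ℝ) (t : ℝ) (x : Ed d) : Matrix (Fin d) (Fin d) ℝ :=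
  Matrix.of fun i j => fderiv ℝ (fun y => follmerV p t y i) x (EuclideanSpace.single j 1)

/-- Mean (barycenter) of a measure on `ℝ^d`. -/
def meanVec {d : ℕ} (μ : Measure (Ed d)) : Ed d := ∫ x, x ∂μ

/-- Covariance matrix of a measure on `ℝ^d`. -/
def covMatrix {d : ℕ} (μ : Measure (Ed d)) : Matrix (Fin d) (Fin d) ℝ :=
  Matrix.of fun i j => ∫ x, (x i - meanVec μ i) * (x j - meanVec μ j) ∂μ

/-- The measure `p^{tx, 1-t²}` with density `y ↦ φ^{tx,1-t²}(y) r(y) / 𝒬_{1-t} r(x)`. -/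
def pCond {d : ℕ} (p : Ed d → ℝ) (t : ℝ) (x : Ed d) : Measure (Ed d) :=
  volume.withDensity fun y =>
    ENNReal.ofReal (gaussDensity (t • x) (1 - t ^ 2) y * relDensity p y / Qop p t x)

/-- `ν(dx) = p(x) dx` is `κ`-semi-log-concave: convex support and `∇²U ⪰ κ I` there. -/
def IsSemiLogConcave {d : ℕ} (p : Ed d → ℝ) (κ : ℝ) : Prop :=
  Convex ℝ (Function.support p) ∧
  ∃ U : Ed d → ℝ, ContDiff ℝ 2 U ∧ (∀ x ∈ Function.support p, p x = Real.exp (-U x)) ∧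
    ∀ x ∈ Function.support p, ∀ v : Ed d, κ * ‖v‖ ^ 2 ≤ iteratedFDeriv ℝ 2 U x ![v, v]

/-- `ν(dx) = p(x) dx` is `β`-semi-log-convex: convex support and `∇²U ⪯ β I` there. -/
def IsSemiLogConvex {d : ℕ} (p : Ed d → ℝ) (β : ℝ) : Prop :=
  Convex ℝ (Function.support p) ∧
  ∃ U : Ed d → ℝ, ContDiff ℝ 2 U ∧ (∀ x ∈ Function.support p, p x = Real.exp (-U x)) ∧
    ∀ x ∈ Function.support p, ∀ v : Ed d, iteratedFDeriv ℝ 2 U x ![v, v] ≤ β * ‖v‖ ^ 2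

/-- `D := (1/√2) · diam (supp ν)` (equal to `0` when the support is unbounded). -/
def Dconst {d : ℕ} (p : Ed d → ℝ) : ℝ :=
  (1 / Real.sqrt 2) * (EMetric.diam (Function.support p)).toReal

/-- The Föllmer velocity field extended to `t = 0` by `V(0,x) := E_ν[X]`. -/
def follmerVfull {d : ℕ} (p : Ed d → ℝ) (t : ℝ) (x : Ed d) : Ed d :=
  if t = 0 then ∫ y, p y • y else follmerV p t x

/-- `X : [0,1] × ℝ^d → ℝ^d` is a Föllmer flow map for `ν(dx) = p(x)dx`: it is `C¹` in both
variables, `X_0 = id` and `∂_t X_t(x) = V(t, X_t(x))` on `[0,1]`. -/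
def IsFollmerFlowMap {d : ℕ} (p : Ed d → ℝ) (X : ℝ → Ed d → Ed d) : Prop :=
  ContDiff ℝ 1 (fun q : ℝ × Ed d => X q.1 q.2) ∧ (∀ x, X 0 x = x) ∧
  ∀ x : Ed d, ∀ t ∈ Set.Icc (0 : ℝ) 1, HasDerivAt (fun s => X s x) (follmerVfull p t (X t x)) t

/-- The piecewise bound `θ_t` used for `κ D² < 1` (and `κ < 0`). -/
def thetaFn (κ D s : ℝ) : ℝ :=
  if s ≤ Real.sqrt ((1 - κ * D ^ 2) / ((1 - κ) * D ^ 2 + 1)) then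
    s * (s ^ 2 + D ^ 2 - 1) / (1 - s ^ 2) ^ 2
  else s * (1 - κ) / (s ^ 2 * (1 - κ) + κ)

/-- The standard Gaussian cumulative distribution function `Φ` on `ℝ`. -/
def gaussCDF (x : ℝ) : ℝ := ∫ y in Set.Iio x, Real.exp (-y ^ 2 / 2) / Real.sqrt (2 * π)

/-- Density of the Gaussian `N(a, S)` on `ℝ^d` with covariance matrix `S`. -/
def gaussDensityMat {d : ℕ} (a : Ed d) (S : Matrix (Fin d) (Fin d) ℝ) (x : Ed d) : ℝ :=
  ((2 * π) ^ (d : ℕ) * S.det) ^ (-(1 : ℝ) / 2) *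
    Real.exp (-(∑ i, ∑ j, (x i - a i) * S⁻¹ i j * (x j - a j)) / 2)

/-- Squared Wasserstein-2 distance, as an infimum over couplings (valued in `ℝ≥0∞`). -/
def W2sq {d : ℕ} (μ ν : Measure (Ed d)) : ℝ≥0∞ :=
  ⨅ (pl : Measure (Ed d × Ed d)) (_ : pl.map Prod.fst = μ ∧ pl.map Prod.snd = ν),
    ∫⁻ z, ENNReal.ofReal (‖z.1 - z.2‖ ^ 2) ∂pl

/-- The heat-type density `q_t(x) = ∫ (2π(1-t²))^{-d/2} exp(-|x-ty|²/(2(1-t²))) p(y) dy`. -/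
def qDens {d : ℕ} (p : Ed d → ℝ) (t : ℝ) (x : Ed d) : ℝ :=
  ∫ y, (2 * π * (1 - t ^ 2)) ^ (-(d : ℝ) / 2) *
    Real.exp (-‖x - t • y‖ ^ 2 / (2 * (1 - t ^ 2))) * p y

/-!
Differentiating under the integral sign gives Tweedie's formula
`∇ log q_t(x) = -(x - t mₜ(x)) / (1 - t²)`, where `mₜ(x)` is the mean of `y` under the weight
`φ_{1-t²}(x - t y) p(y)` normalised by `q_t(x)`. Hence
`(x + ∇ log q_t(x)) / t = (mₜ(x) - t x) / (1 - t²)`.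
As `t → 0` the Gaussian weight converges boundedly to `φ(x)`, so by dominated convergence
`q_t(x) → φ(x)` and `q_t(x) mₜ(x) → φ(x) ∫ y p(y) dy`.
-/

open InnerProductSpace
open scoped Topology

lemma mul_exp_neg_sq_div_le_sqrt (r : ℝ) {b : ℝ} (hb : 0 < b) : r * exp (-r ^ 2 / b) ≤ √b := by
  have key : r / √b ≤ exp ((r / √b) ^ 2) := by
    nlinarith [add_one_le_exp ((r / √b) ^ 2), sq_nonneg (r / √b - 1)]
  rw [div_pow, sq_sqrt hb.le, div_le_iff₀ (sqrt_pos.2 hb)] at key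
  rw [neg_div, exp_neg, ← div_eq_mul_inv, div_le_iff₀ (exp_pos _)]
  linarith

section GaussDensity

variable {d : ℕ}

lemma gaussDensity_nonneg (m : Ed d) {s : ℝ} (hs : 0 ≤ s) (x : Ed d) : 0 ≤ gaussDensity m s x := by
  unfold gaussDensity; positivity

lemma gaussDensity_le (m : Ed d) {s : ℝ} (hs : 0 ≤ s) (x : Ed d) :
    gaussDensity m s x ≤ (2 * π * s) ^ (-(d : ℝ) / 2) := by
  unfold gaussDensity
  refine mul_le_of_le_one_right (by positivity) (exp_le_one_iff.2 ?_)
  rw [neg_div]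
  exact neg_nonpos.2 (by positivity)

lemma norm_gaussDensity_le_one (m : Ed d) {s : ℝ} (hs : 1 ≤ 2 * π * s) (x : Ed d) :
    ‖gaussDensity m s x‖ ≤ 1 := by
  have hs₀ : 0 ≤ s := by nlinarith [pi_pos]
  rw [Real.norm_of_nonneg (gaussDensity_nonneg m hs₀ x)]
  exact (gaussDensity_le m hs₀ x).trans
    (rpow_le_one_of_one_le_of_nonpos hs (by have := d.cast_nonneg (α := ℝ); linarith))

lemma hasGradientAt_gaussDensity (m : Ed d) (s : ℝ) (x : Ed d) :
    HasGradientAt (gaussDensity m s) ((-s⁻¹ * gaussDensity m s x) • (x - m)) x := by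
  have h := ((((hasFDerivAt_id x).sub_const m).norm_sq.neg.mul_const (2 * s)⁻¹).exp).const_mul
    ((2 * π * s) ^ (-(d : ℝ) / 2))
  have hfun : gaussDensity m s =
      fun z => (2 * π * s) ^ (-(d : ℝ) / 2) * exp (-‖z - m‖ ^ 2 * (2 * s)⁻¹) := by
    ext z; simp only [gaussDensity, div_eq_mul_inv]
  rw [hasGradientAt_iff_hasFDerivAt, hfun]
  refine h.congr_fderiv ?_
  ext v
  simp only [div_eq_mul_inv, neg_mul, id_eq, Pi.neg_apply, _root_.mul_inv_rev, map_sub,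
    ContinuousLinearMap.comp_id, smul_neg, _root_.neg_apply, _root_.smul_apply, _root_.sub_apply,
    coe_innerSL_apply, nsmul_eq_mul, Nat.cast_ofNat, smul_eq_mul, neg_smul, map_neg, map_smul,
    toDual_apply_apply, neg_inj]
  ring

lemma norm_gradient_gaussDensity_le (m : Ed d) {s : ℝ} (hs : 0 < s) (x : Ed d) :
    ‖(-s⁻¹ * gaussDensity m s x) • (x - m)‖ ≤ s⁻¹ * (2 * π * s) ^ (-(d : ℝ) / 2) * √(2 * s) := by
  rw [norm_smul, norm_mul, norm_neg, norm_inv, Real.norm_of_nonneg hs.le,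
    Real.norm_of_nonneg (gaussDensity_nonneg m hs.le x), mul_assoc, mul_assoc]
  refine mul_le_mul_of_nonneg_left ?_ (by positivity)
  unfold gaussDensity
  rw [mul_assoc]
  refine mul_le_mul_of_nonneg_left ?_ (by positivity)
  rw [mul_comm]
  exact mul_exp_neg_sq_div_le_sqrt _ (by positivity)

lemma continuous_gaussDensity_mean (s : ℝ) (x : Ed d) :
    Continuous fun m : Ed d => gaussDensity m s x := by
  unfold gaussDensity; fun_prop

lemma integrable_gaussDensity_smul {α E : Type*} [MeasurableSpace α] {μ : Measure α}
    [NormedAddCommGroup E] [NormedSpace ℝ E] {f : α → Ed d} (hf : AEStronglyMeasurable f μ)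
    {g : α → E} (hg : Integrable g μ) {s : ℝ} (hs : 0 ≤ s) (x : Ed d) :
    Integrable (fun a => gaussDensity (f a) s x • g a) μ :=
  hg.bdd_smul _ ((continuous_gaussDensity_mean s x).comp_aestronglyMeasurable hf)
    (.of_forall fun a => by
      rw [Real.norm_of_nonneg (gaussDensity_nonneg _ hs x)]
      exact gaussDensity_le _ hs x)

lemma hasGradientAt_integral_gaussDensity_mul {α : Type*} [MeasurableSpace α] {μ : Measure α}
    {f : α → Ed d} (hf : AEStronglyMeasurable f μ) {w : α → ℝ} (hw : Integrable w μ)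
    {s : ℝ} (hs : 0 < s) (x : Ed d) :
    HasGradientAt (fun z => ∫ a, gaussDensity (f a) s z * w a ∂μ)
      (∫ a, w a • ((-s⁻¹ * gaussDensity (f a) s x) • (x - f a)) ∂μ) x := by
  have hmeas : ∀ z, AEStronglyMeasurable (fun a => gaussDensity (f a) s z) μ := fun z =>
    (continuous_gaussDensity_mean s z).comp_aestronglyMeasurable hf
  have key := hasFDerivAt_integral_of_dominated_of_fderiv_le
    (F := fun z a => gaussDensity (f a) s z * w a)
    (F' := fun z a => toDual ℝ (Ed d) (w a • ((-s⁻¹ * gaussDensity (f a) s z) • (z - f a))))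
    (bound := fun a => s⁻¹ * (2 * π * s) ^ (-(d : ℝ) / 2) * √(2 * s) * ‖w a‖) (x₀ := x) univ_mem
    (.of_forall fun z => (hmeas z).mul hw.1) ?_ ?_ ?_ (hw.norm.const_mul _) ?_
  · have hcomm := (toDual ℝ (Ed d)).toLinearIsometry.integral_comp_comm (μ := μ)
      fun a => w a • ((-s⁻¹ * gaussDensity (f a) s x) • (x - f a))
    simp only [LinearIsometryEquiv.coe_toLinearIsometry] at hcomm
    rwa [hcomm] at key
  · exact integrable_gaussDensity_smul hf hw hs.le x
  · exact (toDual ℝ (Ed d)).continuous.comp_aestronglyMeasurable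
      (hw.1.smul (((hmeas x).const_mul _).smul (aestronglyMeasurable_const.sub hf)))
  · refine .of_forall fun a z _ => ?_
    rw [LinearIsometryEquiv.norm_map, norm_smul, mul_comm]
    exact mul_le_mul_of_nonneg_right (norm_gradient_gaussDensity_le _ hs z) (norm_nonneg _)
  · refine .of_forall fun a z _ => ?_
    rw [map_smul]
    exact (hasGradientAt_gaussDensity (f a) s z).hasFDerivAt.mul_const (w a)

lemma tendsto_integral_gaussDensity_smul {E : Type*} [NormedAddCommGroup E] [NormedSpace ℝ E]
    {g : Ed d → E} (hg : Integrable g) (x : Ed d) :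
    Tendsto (fun t : ℝ => ∫ y, gaussDensity (t • y) (1 - t ^ 2) x • g y) (𝓝 0)
      (𝓝 (gaussDensity 0 1 x • ∫ y, g y)) := by
  have hsmall : ∀ᶠ t : ℝ in 𝓝 0, 1 ≤ 2 * π * (1 - t ^ 2) := by
    have : ∀ᶠ t : ℝ in 𝓝 0, t ^ 2 < 1 / 2 :=
      (continuous_pow 2).continuousAt.eventually (gt_mem_nhds (by norm_num))
    filter_upwards [this] with t ht
    nlinarith [pi_gt_three]
  rw [← integral_smul]
  refine tendsto_integral_filter_of_dominated_convergence (fun y => ‖g y‖)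
    (.of_forall fun t => (Continuous.aestronglyMeasurable ?_).smul hg.1) ?_ hg.norm
    (.of_forall fun y => ?_)
  · unfold gaussDensity; fun_prop
  · filter_upwards [hsmall] with t ht
    refine .of_forall fun y => ?_
    rw [norm_smul]
    exact mul_le_of_le_one_left (norm_nonneg _) (norm_gaussDensity_le_one _ ht x)
  · have hcont : ContinuousAt (fun t : ℝ => gaussDensity (t • y) (1 - t ^ 2) x) 0 := by
      unfold gaussDensity
      fun_prop (disch := norm_num)
    simpa using hcont.tendsto.smul_const (g y)

end GaussDensity

lemma integrable_smul_self_of_integrable_norm_pow_three_mul {d : ℕ} {μ : Measure (Ed d)}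
    {p : Ed d → ℝ} (hp : Integrable p μ) (hp3 : Integrable (fun y => ‖y‖ ^ 3 * p y) μ) :
    Integrable (fun y => p y • y) μ := by
  refine (hp.norm.add hp3.norm).mono' (hp.1.smul aestronglyMeasurable_id) (.of_forall fun y => ?_)
  have : ‖y‖ ≤ 1 + ‖y‖ ^ 3 := by nlinarith [norm_nonneg y, sq_nonneg (‖y‖ - 1)]
  simp only [norm_smul, norm_mul, norm_pow, norm_norm, Pi.add_apply]
  nlinarith [norm_nonneg (p y)]

section Score

variable {d : ℕ} {p : Ed d → ℝ}

lemma qDens_eq_integral_gaussDensity_mul (p : Ed d → ℝ) (t : ℝ) (x : Ed d) :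
    qDens p t x = ∫ y, gaussDensity (t • y) (1 - t ^ 2) x * p y :=
  rfl

lemma hasGradientAt_qDens (hp : Integrable p) (hpy : Integrable fun y => p y • y) {t : ℝ}
    (ht : t ^ 2 < 1) (x : Ed d) :
    HasGradientAt (qDens p t) ((-(1 - t ^ 2)⁻¹) • (qDens p t x • x -
      t • ∫ y, gaussDensity (t • y) (1 - t ^ 2) x • (p y • y))) x := by
  have hs : 0 < 1 - t ^ 2 := by linarith
  have hf : AEStronglyMeasurable (fun y : Ed d => t • y) volume := by fun_prop
  convert hasGradientAt_integral_gaussDensity_mul hf hp hs x using 1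
  · ext z; exact qDens_eq_integral_gaussDensity_mul p t z
  have hsplit : ∀ y, p y • ((-(1 - t ^ 2)⁻¹ * gaussDensity (t • y) (1 - t ^ 2) x) • (x - t • y)) =
      (-(1 - t ^ 2)⁻¹) • ((gaussDensity (t • y) (1 - t ^ 2) x * p y) • x -
        t • (gaussDensity (t • y) (1 - t ^ 2) x • (p y • y))) := fun y => by module
  have hq : Integrable fun y => gaussDensity (t • y) (1 - t ^ 2) x * p y :=
    integrable_gaussDensity_smul hf hp hs.le x
  have hM : Integrable fun y => t • gaussDensity (t • y) (1 - t ^ 2) x • (p y • y) :=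
    (integrable_gaussDensity_smul hf hpy hs.le x).smul t
  simp_rw [hsplit]
  rw [integral_smul, integral_sub (hq.smul_const x) hM, integral_smul_const, integral_smul,
    qDens_eq_integral_gaussDensity_mul]

lemma gradient_log_qDens (hp : Integrable p) (hpy : Integrable fun y => p y • y) {t : ℝ}
    (ht : t ^ 2 < 1) {x : Ed d} (hq : qDens p t x ≠ 0) :
    gradient (fun z => log (qDens p t z)) x = (-(1 - t ^ 2)⁻¹) • (x -
      t • (qDens p t x)⁻¹ • ∫ y, gaussDensity (t • y) (1 - t ^ 2) x • (p y • y)) := by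
  have h := (hasGradientAt_qDens hp hpy ht x).hasFDerivAt.log hq
  rw [← map_smul, ← hasGradientAt_iff_hasFDerivAt] at h
  rw [h.gradient, smul_comm, smul_sub, smul_smul, inv_mul_cancel₀ hq, one_smul, smul_comm _ t]

end Score

theorem statement0_general (d : ℕ) (p : Ed d → ℝ)
    (hp1 : ∫ y, p y = 1) (hp3 : Integrable fun y => ‖y‖ ^ 3 * p y) (x : Ed d) :
    Tendsto
      (fun t : ℝ => (1 / t) • (x + gradient (fun z => Real.log (qDens p t z)) x))
      (nhdsWithin 0 (Set.Ioi 0)) (nhds (∫ y, p y • y)) := by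
  have hp : Integrable p := integrable_of_integral_eq_one hp1
  have hpy := integrable_smul_self_of_integrable_norm_pow_three_mul hp hp3
  have hK : gaussDensity 0 1 x ≠ 0 := by unfold gaussDensity; positivity
  have hq : Tendsto (fun t => qDens p t x) (𝓝 0) (𝓝 (gaussDensity 0 1 x)) := by
    simpa [hp1, ← qDens_eq_integral_gaussDensity_mul] using tendsto_integral_gaussDensity_smul hp x
  have hinv : Tendsto (fun t : ℝ => (1 - t ^ 2)⁻¹) (𝓝 0) (𝓝 1) := by
    simpa using ((continuous_const.sub (continuous_pow 2)).tendsto (0 : ℝ)).inv₀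
      (by norm_num : (1 : ℝ) - 0 ^ 2 ≠ 0)
  have hlim : Tendsto (fun t : ℝ => (1 - t ^ 2)⁻¹ • ((qDens p t x)⁻¹ •
      (∫ y, gaussDensity (t • y) (1 - t ^ 2) x • (p y • y)) - t • x)) (𝓝 0)
      (𝓝 (∫ y, p y • y)) := by
    simpa [hK] using hinv.smul (((hq.inv₀ hK).smul (tendsto_integral_gaussDensity_smul hpy x)).sub
      (tendsto_id.smul_const x))
  refine (hlim.mono_left nhdsWithin_le_nhds).congr' ?_
  have hsmall : ∀ᶠ t : ℝ in 𝓝 0, t ^ 2 < 1 :=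
    (continuous_pow 2).continuousAt.eventually (gt_mem_nhds (by norm_num))
  filter_upwards [nhdsWithin_le_nhds (hq.eventually_ne hK), nhdsWithin_le_nhds hsmall,
    self_mem_nhdsWithin] with t hqt ht htpos
  rw [gradient_log_qDens hp hpy ht hqt]
  have hs : 1 - t ^ 2 ≠ 0 := by linarith
  have ht₀ : t ≠ 0 := ne_of_gt htpos
  match_scalars
  · field_simp
  · field_simp
    ring

/-- for a probability density `p` with finite third moment,
`(x + S(t,x))/t → ∫ y p(y) dy` as `t → 0⁺`, where `S(t,x) = ∇ log q_t(x)`. -/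
theorem statement0 (d : ℕ) (p : Ed d → ℝ) (hpm : Measurable p) (hp0 : ∀ y, 0 ≤ p y)
    (hp1 : ∫ y, p y = 1) (hp3 : Integrable fun y => ‖y‖ ^ 3 * p y) (x : Ed d) :
    Tendsto
      (fun t : ℝ => (1 / t) • (x + gradient (fun z => Real.log (qDens p t z)) x))
      (nhdsWithin 0 (Set.Ioi 0)) (nhds (∫ y, p y • y)) :=
  statement0_general d p hp1 hp3 x
end
end

section
/- Let ν(dx) = p(x)dx be a probability measure on ℝ^d absolutely continuous with respect to γ_d. For every t ∈ (0,1) and x ∈ ℝ^d, the Jacobian of the Föllmer velocity field satisfies ∇_x V(t,x) = (t/(1-t²)²) Cov(p^{tx,1-t²}) - (t/(1-t²)) I_d, equivalently ∇²_x log 𝒬_{1-t} r(x) = (t²/(1-t²)²) Cov(p^{tx,1-t²}) - (t²/(1-t²)) I_d. -/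
open MeasureTheory Real Filter Set Matrix
open scoped ENNReal Pointwise

noncomputable section

/-!
Expanding the square in `φ^{tx,1-t²}` gives `𝒬_{1-t} r(x) = c(x) Z(x)` with the explicit Gaussian
factor `c(x) = (1-t²)^{-d/2} exp(-t²‖x‖²/(2(1-t²)))` and the Laplace-type transform
`Z(x) = ∫ p(y) exp(a⟪x,y⟫ - b‖y‖²) dy`, `a = t/(1-t²)`, `b = t²/(2(1-t²))`; in the same way
`p^{tx,1-t²}` is the tilted measure `p(y) exp(a⟪x,y⟫ - b‖y‖²) dy / Z(x)`. Since `exp(-b‖y‖²)`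
beats every polynomial, `Z` may be differentiated under the integral sign: `∇ log Z = a · mean`,
and differentiating the mean `Z_{y_i} / Z` once more gives `a · Cov`. Hence
`V(t,x) = (mean(p^{tx,1-t²}) - t x) / (1-t²)` and `∇V = (a Cov - t I) / (1-t²)`.
-/

open scoped RealInnerProductSpace

section GaussTilt

variable {E : Type*} [NormedAddCommGroup E] [InnerProductSpace ℝ E]

def gaussTilt (a b : ℝ) (x y : E) : ℝ := exp (a * ⟪x, y⟫ - b * ‖y‖ ^ 2)

lemma gaussTilt_pos (a b : ℝ) (x y : E) : 0 < gaussTilt a b x y := exp_pos _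

lemma continuous_gaussTilt (a b : ℝ) (x : E) : Continuous (gaussTilt a b x) := by
  unfold gaussTilt
  fun_prop

/-- Use `1 + r ≤ eʳ`, then complete the square in the exponent. -/
lemma one_add_pow_mul_exp_le {b : ℝ} (hb : 0 < b) (u : ℝ) (n : ℕ) {r : ℝ} (hr : 0 ≤ r) :
    (1 + r) ^ n * exp (u * r - b * r ^ 2) ≤ exp ((u + n) ^ 2 / (4 * b)) := by
  have hpow : (1 + r) ^ n ≤ exp (n * r) := by
    rw [exp_nat_mul]
    gcongr
    linarith [add_one_le_exp r]
  calc (1 + r) ^ n * exp (u * r - b * r ^ 2) ≤ exp (n * r) * exp (u * r - b * r ^ 2) := by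
        gcongr
    _ = exp ((u + n) * r - b * r ^ 2) := by rw [← exp_add]; ring_nf
    _ ≤ exp ((u + n) ^ 2 / (4 * b)) := by
        rw [exp_le_exp, le_div_iff₀ (by positivity)]
        nlinarith [sq_nonneg (u + n - 2 * b * r)]

lemma one_add_norm_pow_mul_gaussTilt_le {a b R : ℝ} (hb : 0 < b) {x : E} (hx : ‖x‖ ≤ R)
    (n : ℕ) (y : E) :
    (1 + ‖y‖) ^ n * gaussTilt a b x y ≤ exp ((|a| * R + n) ^ 2 / (4 * b)) := by
  refine le_trans ?_ (one_add_pow_mul_exp_le hb (|a| * R) n (norm_nonneg y))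
  unfold gaussTilt
  gcongr _ * exp (?_ - _)
  calc a * ⟪x, y⟫ ≤ |a| * (‖x‖ * ‖y‖) :=
        (le_abs_self _).trans (by rw [abs_mul]; gcongr; exact abs_real_inner_le_norm x y)
    _ ≤ |a| * R * ‖y‖ := by rw [← mul_assoc]; gcongr

lemma hasFDerivAt_gaussTilt (a b : ℝ) (x y : E) :
    HasFDerivAt (fun x => gaussTilt a b x y) ((a * gaussTilt a b x y) • innerSL ℝ y) x := by
  have hinner : HasFDerivAt (fun x => ⟪x, y⟫) (innerSL ℝ y) x := by
    refine (innerSL ℝ y).hasFDerivAt.congr_of_eventuallyEq (.of_forall fun w => ?_)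
    exact real_inner_comm y w
  exact ((hinner.const_mul a).sub_const (b * ‖y‖ ^ 2)).exp.congr_fderiv
    (by rw [smul_smul, mul_comm]; rfl)

lemma one_add_norm_pow_mul_abs_mul_gaussTilt_le {a b : ℝ} {g w : E → ℝ} {n : ℕ} (hb : 0 < b)
    (hgw : ∀ y, |g y| ≤ (1 + ‖y‖) ^ n * w y) {R : ℝ} {x : E} (hx : ‖x‖ ≤ R) (m : ℕ) (y : E) :
    (1 + ‖y‖) ^ m * |g y * gaussTilt a b x y| ≤
      exp ((|a| * R + (n + m : ℕ)) ^ 2 / (4 * b)) * w y := by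
  have hw : 0 ≤ w y :=
    (mul_nonneg_iff_of_pos_left (by positivity)).1 ((abs_nonneg _).trans (hgw y))
  calc (1 + ‖y‖) ^ m * |g y * gaussTilt a b x y|
      = (1 + ‖y‖) ^ m * |g y| * gaussTilt a b x y := by
        rw [abs_mul, abs_of_pos (gaussTilt_pos a b x y), mul_assoc]
    _ ≤ (1 + ‖y‖) ^ m * ((1 + ‖y‖) ^ n * w y) * gaussTilt a b x y := by
        gcongr
        · exact (gaussTilt_pos a b x y).le
        · exact hgw y
    _ = ((1 + ‖y‖) ^ (n + m) * gaussTilt a b x y) * w y := by ring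
    _ ≤ exp ((|a| * R + (n + m : ℕ)) ^ 2 / (4 * b)) * w y := by
        gcongr
        exact one_add_norm_pow_mul_gaussTilt_le hb hx _ y

end GaussTilt

section TiltedIntegral

variable {E : Type*} [NormedAddCommGroup E] [InnerProductSpace ℝ E] [MeasurableSpace E]
  [BorelSpace E] {μ : Measure E} {a b : ℝ} {f g w : E → ℝ} {m n : ℕ}

def tiltedIntegral (μ : Measure E) (a b : ℝ) (g : E → ℝ) (x : E) : ℝ :=
  ∫ y, g y * gaussTilt a b x y ∂μ

def tiltedMoment (μ : Measure E) (a b : ℝ) (g : E → ℝ) (x : E) : E :=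
  ∫ y, (g y * gaussTilt a b x y) • y ∂μ

lemma integrable_mul_gaussTilt (hb : 0 < b) (hg : AEStronglyMeasurable g μ) (hw : Integrable w μ)
    (hgw : ∀ y, |g y| ≤ (1 + ‖y‖) ^ n * w y) (x : E) :
    Integrable (fun y => g y * gaussTilt a b x y) μ := by
  refine Integrable.mono' (hw.const_mul (exp ((|a| * ‖x‖ + (n + 0 : ℕ)) ^ 2 / (4 * b))))
    (hg.mul (continuous_gaussTilt a b x).aestronglyMeasurable) (.of_forall fun y => ?_)
  simpa using one_add_norm_pow_mul_abs_mul_gaussTilt_le hb hgw le_rfl 0 y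

lemma tiltedIntegral_pos (hb : 0 < b) (hg0 : ∀ y, 0 ≤ g y) (hg : Integrable g μ)
    (hpos : 0 < ∫ y, g y ∂μ) (x : E) : 0 < tiltedIntegral μ a b g x := by
  have hint := integrable_mul_gaussTilt (a := a) (n := 0) hb hg.aestronglyMeasurable hg
    (fun y => by simp [abs_of_nonneg (hg0 y)]) x
  rw [integral_pos_iff_support_of_nonneg hg0 hg] at hpos
  rw [tiltedIntegral, integral_pos_iff_support_of_nonneg
    (fun y => mul_nonneg (hg0 y) (gaussTilt_pos a b x y).le) hint]
  convert hpos using 2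
  ext y
  simp [(gaussTilt_pos a b x y).ne']

variable [SecondCountableTopology E]

lemma integrable_smul_gaussTilt (hb : 0 < b) (hg : AEStronglyMeasurable g μ)
    (hw : Integrable w μ) (hgw : ∀ y, |g y| ≤ (1 + ‖y‖) ^ n * w y) (x : E) :
    Integrable (fun y => (g y * gaussTilt a b x y) • y) μ := by
  refine Integrable.mono' (hw.const_mul (exp ((|a| * ‖x‖ + (n + 1 : ℕ)) ^ 2 / (4 * b))))
    ((hg.mul (continuous_gaussTilt a b x).aestronglyMeasurable).smul
      continuous_id.aestronglyMeasurable) (.of_forall fun y => ?_)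
  refine le_trans ?_ (one_add_norm_pow_mul_abs_mul_gaussTilt_le hb hgw le_rfl 1 y)
  rw [norm_smul, Real.norm_eq_abs, pow_one, mul_comm]
  gcongr
  linarith

variable [CompleteSpace E]

/-- Differentiation under the integral sign; on the unit ball around `x` the derivative of the
integrand is dominated by a constant multiple of `w`. -/
lemma hasFDerivAt_tiltedIntegral (hb : 0 < b) (hg : AEStronglyMeasurable g μ)
    (hw : Integrable w μ) (hgw : ∀ y, |g y| ≤ (1 + ‖y‖) ^ n * w y) (x : E) :
    HasFDerivAt (tiltedIntegral μ a b g) (innerSL ℝ (a • tiltedMoment μ a b g x)) x := by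
  set C := exp ((|a| * (‖x‖ + 1) + (n + 1 : ℕ)) ^ 2 / (4 * b))
  have hF' : ∀ x' y, HasFDerivAt (fun x => g y * gaussTilt a b x y)
      (innerSL ℝ (a • (g y * gaussTilt a b x' y) • y)) x' := by
    intro x' y
    refine ((hasFDerivAt_gaussTilt a b x' y).const_mul (g y)).congr_fderiv ?_
    ext v
    simp
    ring
  have hbound : ∀ y, ∀ x' ∈ Metric.ball x 1,
      ‖innerSL ℝ (a • (g y * gaussTilt a b x' y) • y)‖ ≤ |a| * C * w y := by
    intro y x' hx'
    have hx'R : ‖x'‖ ≤ ‖x‖ + 1 := by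
      have := norm_le_norm_add_norm_sub' x' x
      rw [Metric.mem_ball, dist_eq_norm] at hx'
      linarith
    rw [innerSL_apply_norm, norm_smul, norm_smul, Real.norm_eq_abs, Real.norm_eq_abs,
      mul_assoc |a| C]
    refine mul_le_mul_of_nonneg_left ?_ (abs_nonneg a)
    refine le_trans ?_ (one_add_norm_pow_mul_abs_mul_gaussTilt_le (a := a) hb hgw hx'R 1 y)
    rw [pow_one, mul_comm]
    gcongr
    linarith
  have hmoment : Integrable (fun y => a • (g y * gaussTilt a b x y) • y) μ :=
    (integrable_smul_gaussTilt hb hg hw hgw x).smul a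
  have hderiv := hasFDerivAt_integral_of_dominated_of_fderiv_le (μ := μ)
    (Metric.ball_mem_nhds x one_pos)
    (.of_forall fun x' => (hg.mul (continuous_gaussTilt a b x').aestronglyMeasurable))
    (integrable_mul_gaussTilt hb hg hw hgw x)
    ((innerSL ℝ).continuous.comp_aestronglyMeasurable hmoment.aestronglyMeasurable)
    (.of_forall hbound) (hw.const_mul _) (.of_forall fun y x' _ => hF' x' y)
  rw [(innerSL ℝ).integral_comp_comm hmoment, integral_smul] at hderiv
  exact hderiv

lemma hasFDerivAt_tiltedIntegral_div (hb : 0 < b) (hf : AEStronglyMeasurable f μ)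
    (hg : AEStronglyMeasurable g μ) (hw : Integrable w μ)
    (hfw : ∀ y, |f y| ≤ (1 + ‖y‖) ^ m * w y) (hgw : ∀ y, |g y| ≤ (1 + ‖y‖) ^ n * w y) {x : E}
    (hZ : tiltedIntegral μ a b g x ≠ 0) :
    HasFDerivAt (fun x => tiltedIntegral μ a b f x / tiltedIntegral μ a b g x)
      (innerSL ℝ ((a / tiltedIntegral μ a b g x) • (tiltedMoment μ a b f x -
        (tiltedIntegral μ a b f x / tiltedIntegral μ a b g x) • tiltedMoment μ a b g x))) x := by
  have hinv := (hasDerivAt_inv hZ).comp_hasFDerivAt x (hasFDerivAt_tiltedIntegral hb hg hw hgw x)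
  refine ((hasFDerivAt_tiltedIntegral hb hf hw hfw x).mul hinv).congr_fderiv ?_
  ext v
  simp
  field_simp
  ring

end TiltedIntegral

lemma integral_withDensity_ofReal {X F : Type*} [MeasurableSpace X] [NormedAddCommGroup F]
    [NormedSpace ℝ F] {μ : Measure X} {ρ : X → ℝ} (hρ : Measurable ρ) (hρ0 : ∀ x, 0 ≤ ρ x)
    (f : X → F) :
    ∫ x, f x ∂μ.withDensity (fun x => ENNReal.ofReal (ρ x)) = ∫ x, ρ x • f x ∂μ := by
  rw [integral_withDensity_eq_integral_toReal_smul hρ.ennreal_ofReal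
    (.of_forall fun _ => ENNReal.ofReal_lt_top)]
  simp_rw [ENNReal.toReal_ofReal (hρ0 _)]

lemma EuclideanSpace.integral_apply {ι X : Type*} [Fintype ι] [MeasurableSpace X]
    {ν : Measure X} {f : X → EuclideanSpace ℝ ι} (hf : Integrable f ν) (i : ι) :
    (∫ y, f y ∂ν) i = ∫ y, f y i ∂ν :=
  ((EuclideanSpace.proj i).integral_comp_comm hf).symm

section Euclidean

variable {d : ℕ} {μ : Measure (Ed d)}

lemma abs_mul_apply_le {g w : Ed d → ℝ} {n : ℕ} (hgw : ∀ y, |g y| ≤ (1 + ‖y‖) ^ n * w y)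
    (i : Fin d) (y : Ed d) : |g y * y i| ≤ (1 + ‖y‖) ^ (n + 1) * w y := by
  have hw : 0 ≤ (1 + ‖y‖) ^ n * w y := (abs_nonneg _).trans (hgw y)
  have hyi : |y i| ≤ 1 + ‖y‖ := by
    have := PiLp.norm_apply_le y i
    rw [Real.norm_eq_abs] at this
    linarith [norm_nonneg y]
  calc |g y * y i| = |g y| * |y i| := abs_mul _ _
    _ ≤ (1 + ‖y‖) ^ n * w y * (1 + ‖y‖) := by gcongr; exact hgw y
    _ = (1 + ‖y‖) ^ (n + 1) * w y := by ring

lemma tiltedMoment_apply {a b : ℝ} {g w : Ed d → ℝ} {n : ℕ} (hb : 0 < b)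
    (hg : AEStronglyMeasurable g μ) (hw : Integrable w μ)
    (hgw : ∀ y, |g y| ≤ (1 + ‖y‖) ^ n * w y) (x : Ed d) (i : Fin d) :
    tiltedMoment μ a b g x i = tiltedIntegral μ a b (fun y => g y * y i) x := by
  rw [tiltedMoment, EuclideanSpace.integral_apply (integrable_smul_gaussTilt hb hg hw hgw x),
    tiltedIntegral]
  congr 1 with y
  simp only [PiLp.smul_apply, smul_eq_mul]
  ring

variable {ρ : Ed d → ℝ}

lemma meanVec_withDensity_apply (hρ : Measurable ρ) (hρ0 : ∀ y, 0 ≤ ρ y)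
    (hint : Integrable (fun y => ρ y • y) μ) (i : Fin d) :
    meanVec (μ.withDensity fun y => ENNReal.ofReal (ρ y)) i = ∫ y, ρ y * y i ∂μ := by
  rw [meanVec, integral_withDensity_ofReal hρ hρ0, EuclideanSpace.integral_apply hint]
  rfl

lemma covMatrix_withDensity_apply (hρ : Measurable ρ) (hρ0 : ∀ y, 0 ≤ ρ y)
    (hρ1 : ∫ y, ρ y ∂μ = 1) (hint : Integrable (fun y => ρ y • y) μ) {i j : Fin d}
    (hij : Integrable (fun y => ρ y * (y i * y j)) μ) :
    covMatrix (μ.withDensity fun y => ENNReal.ofReal (ρ y)) i j =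
      ∫ y, ρ y * (y i * y j) ∂μ - (∫ y, ρ y * y i ∂μ) * ∫ y, ρ y * y j ∂μ := by
  have hcoord : ∀ k, Integrable (fun y => ρ y * y k) μ := fun k =>
    ((EuclideanSpace.proj k : Ed d →L[ℝ] ℝ).integrable_comp hint).congr
      (.of_forall fun y => by simp)
  have h0 : Integrable ρ μ := .of_integral_ne_zero (by simp [hρ1])
  rw [covMatrix, of_apply, meanVec_withDensity_apply hρ hρ0 hint,
    meanVec_withDensity_apply hρ hρ0 hint, integral_withDensity_ofReal hρ hρ0]
  set mi := ∫ y, ρ y * y i ∂μ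
  set mj := ∫ y, ρ y * y j ∂μ
  have hexpand : (fun y => ρ y • ((y i - mi) * (y j - mj))) = fun y =>
      ρ y * (y i * y j) - mj * (ρ y * y i) - mi * (ρ y * y j) + mi * mj * ρ y := by
    ext y
    simp only [smul_eq_mul]
    ring
  have h1 : Integrable (fun y => ρ y * (y i * y j) - mj * (ρ y * y i)) μ :=
    hij.sub ((hcoord i).const_mul mj)
  have h2 : Integrable (fun y => ρ y * (y i * y j) - mj * (ρ y * y i) - mi * (ρ y * y j)) μ :=
    h1.sub ((hcoord j).const_mul mi)
  rw [hexpand, integral_add h2 (h0.const_mul _), integral_sub h1 ((hcoord j).const_mul _),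
    integral_sub hij ((hcoord i).const_mul _), integral_const_mul, integral_const_mul,
    integral_const_mul, hρ1]
  ring

end Euclidean

lemma gradient_eq_of_hasFDerivAt_innerSL {F : Type*} [NormedAddCommGroup F]
    [InnerProductSpace ℝ F] [CompleteSpace F] {f : F → ℝ} {v x : F}
    (h : HasFDerivAt f (innerSL ℝ v) x) : gradient f x = v :=
  (hasGradientAt_iff_hasFDerivAt.2 h).gradient

section Gaussian

variable {d : ℕ}

lemma stdGaussDensity_pos (x : Ed d) : 0 < stdGaussDensity d x := by
  unfold stdGaussDensity
  positivity

lemma integral_stdGaussian (f : Ed d → ℝ) :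
    ∫ z, f z ∂stdGaussian d = ∫ z, stdGaussDensity d z * f z :=
  integral_withDensity_ofReal (by unfold stdGaussDensity; fun_prop)
    (fun z => (stdGaussDensity_pos z).le) f

lemma gaussDensity_add_smul {s : ℝ} (hs : 0 < s) (m z : Ed d) :
    gaussDensity m s (m + √s • z) = (√s ^ d)⁻¹ * stdGaussDensity d z := by
  have hsd : (√s ^ d)⁻¹ = s ^ (-(d : ℝ) / 2) := by
    rw [sqrt_eq_rpow, ← rpow_natCast, ← rpow_mul hs.le, ← rpow_neg hs.le]
    ring_nf
  rw [gaussDensity, stdGaussDensity, add_sub_cancel_left, norm_smul, mul_pow, norm_eq_abs,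
    sq_abs, sq_sqrt hs.le, mul_rpow (by positivity) hs.le, hsd]
  field_simp

lemma integral_stdGaussian_comp_add_smul {s : ℝ} (hs : 0 < s) (m : Ed d) (f : Ed d → ℝ) :
    ∫ z, f (m + √s • z) ∂stdGaussian d = ∫ y, gaussDensity m s y * f y := by
  set G := fun y => gaussDensity m s y * f y
  have hσ : 0 < √s ^ d := pow_pos (sqrt_pos.2 hs) d
  have hpt : ∀ z, stdGaussDensity d z * f (m + √s • z) = √s ^ d * G (m + √s • z) := by
    intro z
    simp only [G, gaussDensity_add_smul hs]
    field_simp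
  simp_rw [integral_stdGaussian, hpt, integral_const_mul]
  rw [Measure.integral_comp_smul volume (fun w => G (m + w)), integral_add_left_eq_self,
    finrank_euclideanSpace_fin, smul_eq_mul, abs_of_pos (inv_pos.2 hσ), ← mul_assoc,
    mul_inv_cancel₀ hσ.ne', one_mul]

end Gaussian

section Follmer

local notation "𝒵[" t "]" => tiltedIntegral volume (t / (1 - t ^ 2)) (t ^ 2 / (2 * (1 - t ^ 2)))
local notation "ℳ[" t "]" => tiltedMoment volume (t / (1 - t ^ 2)) (t ^ 2 / (2 * (1 - t ^ 2)))

variable {d : ℕ} {p : Ed d → ℝ} {t : ℝ}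

lemma Qop_eq_integral_gaussDensity_mul (ht : t ^ 2 < 1) (x : Ed d) :
    Qop p t x = ∫ y, gaussDensity (t • x) (1 - t ^ 2) y * relDensity p y :=
  integral_stdGaussian_comp_add_smul (by linarith) _ _

lemma gaussDensity_mul_relDensity (ht : t ^ 2 < 1) (x y : Ed d) :
    gaussDensity (t • x) (1 - t ^ 2) y * relDensity p y =
      (1 - t ^ 2) ^ (-(d : ℝ) / 2) * exp (-(t ^ 2 / (2 * (1 - t ^ 2))) * ‖x‖ ^ 2) *
        (p y * gaussTilt (t / (1 - t ^ 2)) (t ^ 2 / (2 * (1 - t ^ 2))) x y) := by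
  have hs : 0 < 1 - t ^ 2 := by linarith
  have hexp : -‖y - t • x‖ ^ 2 / (2 * (1 - t ^ 2)) + ‖y‖ ^ 2 / 2 =
      -(t ^ 2 / (2 * (1 - t ^ 2))) * ‖x‖ ^ 2 +
        (t / (1 - t ^ 2) * ⟪x, y⟫ - t ^ 2 / (2 * (1 - t ^ 2)) * ‖y‖ ^ 2) := by
    rw [norm_sub_sq_real, inner_smul_right, norm_smul, mul_pow, norm_eq_abs, sq_abs,
      real_inner_comm]
    field_simp
    ring
  have hsplit : exp (-‖y - t • x‖ ^ 2 / (2 * (1 - t ^ 2))) =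
      exp (-(t ^ 2 / (2 * (1 - t ^ 2))) * ‖x‖ ^ 2) *
        exp (t / (1 - t ^ 2) * ⟪x, y⟫ - t ^ 2 / (2 * (1 - t ^ 2)) * ‖y‖ ^ 2) *
        exp (-‖y‖ ^ 2 / 2) := by
    rw [← exp_add, ← exp_add]
    congr 1
    linarith
  rw [gaussDensity, relDensity, stdGaussDensity, gaussTilt, mul_rpow (by positivity) hs.le,
    hsplit]
  field_simp

lemma Qop_eq_mul_tiltedIntegral (ht : t ^ 2 < 1) (x : Ed d) :
    Qop p t x = (1 - t ^ 2) ^ (-(d : ℝ) / 2) * exp (-(t ^ 2 / (2 * (1 - t ^ 2))) * ‖x‖ ^ 2) *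
      𝒵[t] p x := by
  simp_rw [Qop_eq_integral_gaussDensity_mul ht, gaussDensity_mul_relDensity ht,
    integral_const_mul]
  rfl

lemma tiltedIntegral_follmer_pos (hp0 : ∀ y, 0 ≤ p y) (hp1 : ∫ y, p y = 1) (ht : t ∈ Ioo 0 1)
    (x : Ed d) : 0 < 𝒵[t] p x := by
  have hs : 0 < 1 - t ^ 2 := by nlinarith [ht.1, ht.2]
  have hb : 0 < t ^ 2 / (2 * (1 - t ^ 2)) := by have := ht.1; positivity
  exact tiltedIntegral_pos hb hp0 (.of_integral_ne_zero (by simp [hp1])) (by simp [hp1]) x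

lemma hasFDerivAt_log_Qop (hpm : Measurable p) (hp0 : ∀ y, 0 ≤ p y) (hp1 : ∫ y, p y = 1)
    (ht : t ∈ Ioo 0 1) (x : Ed d) :
    HasFDerivAt (fun y => log (Qop p t y))
      (innerSL ℝ ((-(t ^ 2 / (1 - t ^ 2))) • x + (t / (1 - t ^ 2) / 𝒵[t] p x) • ℳ[t] p x)) x := by
  have hs : 0 < 1 - t ^ 2 := by nlinarith [ht.1, ht.2]
  have hb : 0 < t ^ 2 / (2 * (1 - t ^ 2)) := by have := ht.1; positivity
  have hp : Integrable p := .of_integral_ne_zero (by simp [hp1])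
  have hZ := tiltedIntegral_follmer_pos hp0 hp1 ht x
  have hgauss := (((hasStrictFDerivAt_norm_sq x).hasFDerivAt.const_mul
    (-(t ^ 2 / (2 * (1 - t ^ 2))))).exp.const_mul ((1 - t ^ 2) ^ (-(d : ℝ) / 2)))
  have hZ' := hasFDerivAt_tiltedIntegral (a := t / (1 - t ^ 2)) (n := 0) hb
    hpm.aestronglyMeasurable hp (fun y => by simp [abs_of_nonneg (hp0 y)]) x
  simp only [Qop_eq_mul_tiltedIntegral (show t ^ 2 < 1 by nlinarith [ht.1, ht.2])]
  refine ((hgauss.mul hZ').log (mul_pos (by positivity) hZ).ne').congr_fderiv ?_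
  ext v
  simp only [Pi.mul_apply, _root_.add_apply, _root_.smul_apply, innerSL_apply_apply,
    inner_add_left, real_inner_smul_left, smul_eq_mul, nsmul_eq_mul]
  generalize 𝒵[t] p x = Z at hZ ⊢
  field_simp
  ring

lemma follmerV_apply (hpm : Measurable p) (hp0 : ∀ y, 0 ≤ p y) (hp1 : ∫ y, p y = 1)
    (ht : t ∈ Ioo 0 1) (x : Ed d) (i : Fin d) :
    follmerV p t x i = (𝒵[t] (fun y => p y * y i) x / 𝒵[t] p x - t * x i) / (1 - t ^ 2) := by
  have hs : 0 < 1 - t ^ 2 := by nlinarith [ht.1, ht.2]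
  have hb : 0 < t ^ 2 / (2 * (1 - t ^ 2)) := by have := ht.1; positivity
  have hp : Integrable p := .of_integral_ne_zero (by simp [hp1])
  rw [follmerV, gradient_eq_of_hasFDerivAt_innerSL (hasFDerivAt_log_Qop hpm hp0 hp1 ht x)]
  simp only [PiLp.smul_apply, PiLp.add_apply, smul_eq_mul, tiltedMoment_apply (n := 0) hb
    hpm.aestronglyMeasurable hp (fun y => by simp [abs_of_nonneg (hp0 y)])]
  field_simp [ht.1.ne']
  ring

lemma pCond_eq_withDensity (ht : t ^ 2 < 1) (x : Ed d) :
    pCond p t x = volume.withDensity fun y => ENNReal.ofReal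
      (p y * gaussTilt (t / (1 - t ^ 2)) (t ^ 2 / (2 * (1 - t ^ 2))) x y / 𝒵[t] p x) := by
  have hs : 0 < 1 - t ^ 2 := by linarith
  have hK : 0 < (1 - t ^ 2) ^ (-(d : ℝ) / 2) * exp (-(t ^ 2 / (2 * (1 - t ^ 2))) * ‖x‖ ^ 2) := by
    positivity
  rw [pCond]
  congr with y
  rw [gaussDensity_mul_relDensity ht, Qop_eq_mul_tiltedIntegral ht, mul_div_mul_left _ _ hK.ne']

lemma covMatrix_pCond_apply (hpm : Measurable p) (hp0 : ∀ y, 0 ≤ p y) (hp1 : ∫ y, p y = 1)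
    (ht : t ∈ Ioo 0 1) (x : Ed d) (i j : Fin d) :
    covMatrix (pCond p t x) i j = 𝒵[t] (fun y => p y * y i * y j) x / 𝒵[t] p x -
      𝒵[t] (fun y => p y * y i) x / 𝒵[t] p x * (𝒵[t] (fun y => p y * y j) x / 𝒵[t] p x) := by
  have hs : 0 < 1 - t ^ 2 := by nlinarith [ht.1, ht.2]
  have hb : 0 < t ^ 2 / (2 * (1 - t ^ 2)) := by have := ht.1; positivity
  have hp : Integrable p := .of_integral_ne_zero (by simp [hp1])
  have hdom : ∀ y, |p y| ≤ (1 + ‖y‖) ^ 0 * p y := fun y => by simp [abs_of_nonneg (hp0 y)]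
  set Z := 𝒵[t] p x
  have hZ : 0 < Z := tiltedIntegral_follmer_pos hp0 hp1 ht x
  set ρ := fun y => p y * gaussTilt (t / (1 - t ^ 2)) (t ^ 2 / (2 * (1 - t ^ 2))) x y / Z
  have hρ : ∀ f : Ed d → ℝ, ∫ y, ρ y * f y = 𝒵[t] (fun y => p y * f y) x / Z := by
    intro f
    rw [tiltedIntegral, ← integral_div]
    congr with y
    ring
  have hρm : Measurable ρ := (hpm.mul (continuous_gaussTilt _ _ x).measurable).div_const Z
  have hρ0 : ∀ y, 0 ≤ ρ y := fun y =>
    div_nonneg (mul_nonneg (hp0 y) (gaussTilt_pos _ _ x y).le) hZ.le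
  have hρ1 : ∫ y, ρ y = 1 := by
    have h := hρ 1
    simp only [Pi.one_apply, mul_one] at h
    exact h.trans (div_self hZ.ne')
  have hint : Integrable (fun y => ρ y • y) :=
    ((integrable_smul_gaussTilt hb hpm.aestronglyMeasurable hp hdom x).smul Z⁻¹).congr
      (.of_forall fun y => by simp only [Pi.smul_apply, smul_smul, ρ]; ring_nf)
  have hij : Integrable (fun y => ρ y * (y i * y j)) :=
    ((integrable_mul_gaussTilt hb (by fun_prop) hp
      (abs_mul_apply_le (abs_mul_apply_le hdom i) j) x).div_const Z).congr
      (.of_forall fun y => by simp only [ρ]; ring)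
  rw [pCond_eq_withDensity (by nlinarith), covMatrix_withDensity_apply hρm hρ0 hρ1 hint hij,
    hρ, hρ, hρ]
  simp only [mul_assoc]

lemma jacobianV_apply (hpm : Measurable p) (hp0 : ∀ y, 0 ≤ p y) (hp1 : ∫ y, p y = 1)
    (ht : t ∈ Ioo 0 1) (x : Ed d) (i j : Fin d) :
    jacobianV p t x i j =
      (t / (1 - t ^ 2) * (𝒵[t] (fun y => p y * y i * y j) x / 𝒵[t] p x -
          𝒵[t] (fun y => p y * y i) x / 𝒵[t] p x * (𝒵[t] (fun y => p y * y j) x / 𝒵[t] p x)) -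
        t * if i = j then 1 else 0) / (1 - t ^ 2) := by
  have hs : 0 < 1 - t ^ 2 := by nlinarith [ht.1, ht.2]
  have hb : 0 < t ^ 2 / (2 * (1 - t ^ 2)) := by have := ht.1; positivity
  have hp : Integrable p := .of_integral_ne_zero (by simp [hp1])
  have hdom : ∀ y, |p y| ≤ (1 + ‖y‖) ^ 0 * p y := fun y => by simp [abs_of_nonneg (hp0 y)]
  have hpi : AEStronglyMeasurable (fun y : Ed d => p y * y i) := by fun_prop
  have hmean := hasFDerivAt_tiltedIntegral_div hb hpi hpm.aestronglyMeasurable hp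
    (abs_mul_apply_le hdom i) hdom (tiltedIntegral_follmer_pos hp0 hp1 ht x).ne'
  have hV := ((hmean.sub ((EuclideanSpace.proj i : Ed d →L[ℝ] ℝ).hasFDerivAt.const_mul t)).mul_const
    (1 - t ^ 2)⁻¹).congr_of_eventuallyEq (f₁ := fun y => follmerV p t y i)
      (.of_forall fun y => (follmerV_apply hpm hp0 hp1 ht y i).trans (div_eq_mul_inv _ _))
  rw [jacobianV, of_apply, hV.fderiv]
  simp [EuclideanSpace.inner_single_right, tiltedMoment_apply hb hpi hp (abs_mul_apply_le hdom i),
    tiltedMoment_apply hb hpm.aestronglyMeasurable hp hdom]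
  ring

end Follmer

/-- representation of the Jacobian of the Föllmer velocity field,
`∇V(t,x) = (t/(1-t²)²) Cov(p^{tx,1-t²}) - (t/(1-t²)) I_d`. -/
theorem statement3 (d : ℕ) (p : Ed d → ℝ) (hpm : Measurable p) (hp0 : ∀ y, 0 ≤ p y)
    (hp1 : ∫ y, p y = 1) (t : ℝ) (ht : t ∈ Set.Ioo (0 : ℝ) 1) (x : Ed d) :
    jacobianV p t x =
      (t / (1 - t ^ 2) ^ 2) • covMatrix (pCond p t x) -
        (t / (1 - t ^ 2)) • (1 : Matrix (Fin d) (Fin d) ℝ) := by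
  ext i j
  rw [jacobianV_apply hpm hp0 hp1 ht x i j, Matrix.sub_apply, Matrix.smul_apply, Matrix.smul_apply,
    covMatrix_pCond_apply hpm hp0 hp1 ht x i j, one_apply, smul_eq_mul, smul_eq_mul]
  generalize 1 - t ^ 2 = s
  ring
end
end
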